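/- Take σ = 1. Let F ⊂ ℝⁿ be a linear subspace of dimension d < n with projection Π, ε₂, ε_∞ > 0, 0 < α < 1, 0 < γ < 1. Define T(Y) = ∑ᵢ (Yᵢ − (ΠY)ᵢ)², let q be the (1−γ)-quantile of the chi-squared distribution with n−d degrees of freedom, and z = Φ⁻¹(1 − α/(4n)). Define the band: if T ≤ q then L = ΠY − (Ω_F·z + ε_∞)·𝟙 and U = ΠY + (Ω_F·z + ε_∞)·𝟙; if T > q then L = Y − z·𝟙 and U = Y + z·𝟙 (𝟙 the all-ones vector). Let V = { f ∈ ℝⁿ : ‖f − Πf‖ ≤ ε₂ and ‖f − Πf‖_∞ ≤ ε_∞ }. Then inf_{f∈V} P_f( L ≤ f ≤ U ) ≥ 1 − α. -/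

import Mathlib

open MeasureTheory ProbabilityTheory Real

noncomputable section

/-- Product Gaussian measure `N(f, σ² Iₙ)` on `ℝⁿ`. -/
def gaussP (n : ℕ) (f : Fin n → ℝ) (σ : ℝ) : Measure (Fin n → ℝ) :=
  Measure.pi fun i => gaussianReal (f i) (Real.toNNReal (σ ^ 2))

/-- Standard normal CDF `Φ`. -/
def stdCDF (x : ℝ) : ℝ := ((gaussianReal 0 1) (Set.Iic x)).toReal

/-- Standard normal density `φ`. -/
def stdPDF (x : ℝ) : ℝ := Real.exp (-(x ^ 2) / 2) / Real.sqrt (2 * Real.pi)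

/-- `τ(ε) = Φ(ε/2) - Φ(-ε/2)`. -/
def tau (ε : ℝ) : ℝ := stdCDF (ε / 2) - stdCDF (-(ε / 2))

/-- Inverse of `τ`. -/
def tauInv (p : ℝ) : ℝ := Function.invFun tau p

/-- Standard normal quantile function `Φ⁻¹`. -/
def PhiInv (p : ℝ) : ℝ := Function.invFun stdCDF p

/-- Normalized Euclidean norm `‖v‖ = √((1/n) ∑ vᵢ²)`. -/
def norm2 (n : ℕ) (v : Fin n → ℝ) : ℝ := Real.sqrt ((∑ i, (v i) ^ 2) / n)

/-- Sup norm `‖v‖_∞ = maxᵢ |vᵢ|`. -/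
def normInf (n : ℕ) (v : Fin n → ℝ) : ℝ := ⨆ i, |v i|

/-- Normalized inner product. -/
def inner2 (n : ℕ) (u v : Fin n → ℝ) : ℝ := (∑ i, u i * v i) / n

/-- Total variation distance between two measures on `ℝⁿ`. -/
def dTV (n : ℕ) (P Q : Measure (Fin n → ℝ)) : ℝ :=
  ⨆ A : {A : Set (Fin n → ℝ) // MeasurableSet A}, |(P A).toReal - (Q A).toReal|

/-- Width of the band `(L, U)` at data `y`. -/
def width (n : ℕ) (L U : (Fin n → ℝ) → Fin n → ℝ) (y : Fin n → ℝ) : ℝ :=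
  ⨆ i, (U y i - L y i)

/-- The band `(L,U)` covers `g` at data `y`. -/
def covers (n : ℕ) (L U : (Fin n → ℝ) → Fin n → ℝ) (g y : Fin n → ℝ) : Prop :=
  ∀ i, L y i ≤ g i ∧ g i ≤ U y i

/-- `P` is the orthogonal projection onto the subspace `F` of `ℝⁿ`. -/
def IsOrthProjOn (n : ℕ) (F : Submodule ℝ (Fin n → ℝ))
    (P : (Fin n → ℝ) →ₗ[ℝ] (Fin n → ℝ)) : Prop :=
  (∀ f, P f ∈ F) ∧ (∀ f, ∀ g ∈ F, inner2 n (f - P f) g = 0)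

/-- `Ω_F = max_i ‖Π_F eᵢ‖ / ‖eᵢ‖`. -/
def OmegaF (n : ℕ) (P : (Fin n → ℝ) →ₗ[ℝ] (Fin n → ℝ)) : ℝ :=
  ⨆ i : Fin n, norm2 n (P (Pi.single i 1)) / norm2 n (Pi.single i 1)

/-- The `p`-quantile of the chi-squared distribution with `m` degrees of freedom. -/
def chiSqQuantile (m : ℕ) (p : ℝ) : ℝ :=
  sInf {t : ℝ | ENNReal.ofReal p ≤
    (Measure.pi fun _ : Fin m => gaussianReal 0 1) {z | ∑ k, (z k) ^ 2 ≤ t}}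


/-- Goodness-of-fit statistic `T(Y) = ∑ᵢ (Yᵢ − (ΠY)ᵢ)²`. -/
def Tstat (n : ℕ) (P : (Fin n → ℝ) →ₗ[ℝ] (Fin n → ℝ)) (y : Fin n → ℝ) : ℝ :=
  ∑ i, (y i - P y i) ^ 2

/-- `z = Φ⁻¹(1 − α/(4n))`. -/
def zCrit (n : ℕ) (α : ℝ) : ℝ := PhiInv (1 - α / (4 * n))

/-- `c = Ω_F·z + ε_∞`. -/
def cRad (n : ℕ) (P : (Fin n → ℝ) →ₗ[ℝ] (Fin n → ℝ)) (α εinf : ℝ) : ℝ :=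
  OmegaF n P * zCrit n α + εinf

open Classical in
/-- Lower band: `ΠY − c·𝟙` if `T ≤ q`, else `Y − z·𝟙`. -/
def bandL (n : ℕ) (P : (Fin n → ℝ) →ₗ[ℝ] (Fin n → ℝ)) (q α εinf : ℝ)
    (y : Fin n → ℝ) : Fin n → ℝ :=
  fun i => if Tstat n P y ≤ q then P y i - cRad n P α εinf else y i - zCrit n α

open Classical in
/-- Upper band: `ΠY + c·𝟙` if `T ≤ q`, else `Y + z·𝟙`. -/
def bandU (n : ℕ) (P : (Fin n → ℝ) →ₗ[ℝ] (Fin n → ℝ)) (q α εinf : ℝ)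
    (y : Fin n → ℝ) : Fin n → ℝ :=
  fun i => if Tstat n P y ≤ q then P y i + cRad n P α εinf else y i + zCrit n α

/-!
Under `P_f` the coordinates `Yᵢ` are `N(fᵢ, 1)` and, `Π` being symmetric, `(ΠY)ᵢ = ∑ⱼ (Πeᵢ)ⱼ Yⱼ`
is `N((Πf)ᵢ, ‖Πeᵢ‖²)` with `‖Πeᵢ‖ ≤ Ω_F` (Euclidean norm). Since `Φ(z) = 1 − α/(4n)`, each of the
`2n` events `|Yᵢ − fᵢ| > z` and `|(ΠY)ᵢ − (Πf)ᵢ| > Ω_F z` has probability at most `α/(2n)`.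
Off their union both branches of the band cover `f` (the second one because
`|fᵢ − (Πf)ᵢ| ≤ ε_∞`), whatever the outcome of the test, so the coverage is at least `1 − α`.
-/

open scoped NNReal ENNReal

namespace ProbabilityTheory

lemma continuous_cdf_of_measure_singleton (μ : Measure ℝ) [IsProbabilityMeasure μ]
    (hμ : ∀ x, μ {x} = 0) : Continuous (cdf μ) := by
  refine continuous_iff_continuousAt.2 fun x => ?_
  have hleft : Function.leftLim (cdf μ) x = cdf μ x := by
    have h := (cdf μ).measure_singleton x
    rw [measure_cdf, hμ, eq_comm, ENNReal.ofReal_eq_zero, sub_nonpos] at h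
    exact le_antisymm ((cdf μ).mono.leftLim_le le_rfl) h
  rw [(cdf μ).mono.continuousAt_iff_leftLim_eq_rightLim, hleft, (cdf μ).rightLim_eq]

lemma exists_cdf_eq (μ : Measure ℝ) [IsProbabilityMeasure μ] (hμ : Continuous (cdf μ))
    {p : ℝ} (hp0 : 0 < p) (hp1 : p < 1) : ∃ x, cdf μ x = p := by
  obtain ⟨a, ha⟩ := ((tendsto_cdf_atBot μ).eventually (eventually_lt_nhds hp0)).exists
  obtain ⟨b, hb⟩ := ((tendsto_cdf_atTop μ).eventually (eventually_gt_nhds hp1)).exists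
  exact intermediate_value_univ a b hμ ⟨ha.le, hb.le⟩

lemma map_pi_gaussianReal_sum_mul {ι : Type*} [Fintype ι] (m : ι → ℝ) (v : ι → ℝ≥0)
    (u : ι → ℝ) :
    (Measure.pi fun i => gaussianReal (m i) (v i)).map (fun y => ∑ i, u i * y i)
      = gaussianReal (∑ i, u i * m i) (∑ i, u i ^ 2 * v i).toNNReal := by
  set μ := Measure.pi fun i => gaussianReal (m i) (v i)
  have hcoord : ∀ i, HasLaw (fun y : ι → ℝ => y i) (gaussianReal (m i) (v i)) μ :=
    fun i => ⟨(measurable_pi_apply i).aemeasurable, (measurePreserving_eval _ i).map_eq⟩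
  have hlaw : HasGaussianLaw (fun y : ι → ℝ => ∑ i, u i * y i) μ :=
    iIndepFun.hasGaussianLaw_fun_sum (X := fun i (y : ι → ℝ) => u i * y i)
      (fun i => (hcoord i).hasGaussianLaw.fun_smul (u i))
      (iIndepFun_pi (X := fun i x => u i * x) fun i => by fun_prop)
  rw [hlaw.map_eq_gaussianReal]
  congr
  · rw [integral_finsetSum _ fun i _ => ((hcoord i).hasGaussianLaw.integrable).const_mul (u i)]
    congr 1 with i
    rw [integral_const_mul, (hcoord i).integral_eq, integral_id_gaussianReal]
  · have hvar := variance_sum_pi (μ := fun i => gaussianReal (m i) (v i))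
      (X := fun i x => u i * x) fun i => (memLp_id_gaussianReal 2).const_mul (u i)
    rw [Finset.sum_fn] at hvar
    rw [hvar]
    congr 1 with i
    rw [variance_const_mul, variance_fun_id_gaussianReal]

lemma gaussianReal_eq_map_stdGaussian (m : ℝ) (v : ℝ≥0) :
    gaussianReal m v = (gaussianReal 0 1).map (fun x => m + √v * x) := by
  rw [show (fun x => m + √v * x) = (m + ·) ∘ (√v * ·) from rfl,
    ← Measure.map_map (by fun_prop) (by fun_prop), gaussianReal_map_const_mul,
    gaussianReal_map_const_add, mul_zero, zero_add]
  congr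
  ext
  simp

end ProbabilityTheory

open ProbabilityTheory

lemma stdCDF_eq_cdf : stdCDF = cdf (gaussianReal 0 1) :=
  funext fun x => (cdf_eq_real _ x).symm

lemma stdGaussian_singleton (x : ℝ) : gaussianReal 0 1 {x} = 0 :=
  gaussianReal_absolutelyContinuous 0 one_ne_zero Real.volume_singleton

lemma stdCDF_le_one (x : ℝ) : stdCDF x ≤ 1 :=
  stdCDF_eq_cdf ▸ cdf_le_one _ x

lemma stdCDF_PhiInv {p : ℝ} (hp0 : 0 < p) (hp1 : p < 1) : stdCDF (PhiInv p) = p :=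
  Function.invFun_eq <| stdCDF_eq_cdf ▸
    exists_cdf_eq _ (continuous_cdf_of_measure_singleton _ stdGaussian_singleton) hp0 hp1

lemma stdGaussian_Ioi (z : ℝ) : gaussianReal 0 1 (Set.Ioi z) = ENNReal.ofReal (1 - stdCDF z) := by
  rw [← Set.compl_Iic, prob_compl_eq_one_sub measurableSet_Iic, stdCDF_eq_cdf, ← ofReal_cdf,
    ← ENNReal.ofReal_one, ENNReal.ofReal_sub _ (cdf_nonneg _ _)]

lemma stdGaussian_Iio_neg (z : ℝ) :
    gaussianReal 0 1 (Set.Iio (-z)) = gaussianReal 0 1 (Set.Ioi z) := by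
  conv_lhs => rw [← neg_zero, ← gaussianReal_map_neg]
  rw [Measure.map_apply (by fun_prop) measurableSet_Iio]
  congr 1
  ext x
  simp

lemma stdCDF_zero : stdCDF 0 = 1 / 2 := by
  have hIio : gaussianReal 0 1 (Set.Iio 0) = ENNReal.ofReal (stdCDF 0) := by
    rw [measure_congr (Iio_ae_eq_Iic' (stdGaussian_singleton 0)), stdCDF_eq_cdf, ofReal_cdf]
  have h := stdGaussian_Iio_neg 0
  rw [neg_zero, stdGaussian_Ioi, hIio, ENNReal.ofReal_eq_ofReal_iff (stdCDF_eq_cdf ▸ cdf_nonneg _ _)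
    (by linarith [stdCDF_le_one 0])] at h
  linarith

lemma PhiInv_nonneg {p : ℝ} (hp : 1 / 2 < p) (hp1 : p < 1) : 0 ≤ PhiInv p := by
  by_contra! h
  have := (stdCDF_eq_cdf ▸ monotone_cdf _ : Monotone stdCDF) h.le
  rw [stdCDF_PhiInv (by linarith) hp1, stdCDF_zero] at this
  linarith

lemma stdGaussian_abs_gt_le (z : ℝ) :
    gaussianReal 0 1 {x | z < |x|} ≤ ENNReal.ofReal (2 * (1 - stdCDF z)) := by
  have hset : {x : ℝ | z < |x|} = Set.Iio (-z) ∪ Set.Ioi z := by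
    ext x
    simp [lt_abs, lt_neg, or_comm]
  have h1 : 0 ≤ 1 - stdCDF z := sub_nonneg.2 (stdCDF_le_one z)
  calc gaussianReal 0 1 {x | z < |x|}
      ≤ gaussianReal 0 1 (Set.Iio (-z)) + gaussianReal 0 1 (Set.Ioi z) :=
        hset ▸ measure_union_le _ _
    _ = ENNReal.ofReal (2 * (1 - stdCDF z)) := by
        rw [stdGaussian_Iio_neg, stdGaussian_Ioi, ← ENNReal.ofReal_add h1 h1, two_mul]

lemma gaussianReal_abs_sub_gt_le (m : ℝ) (v : ℝ≥0) {t z : ℝ} (ht : √v * z ≤ t) :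
    gaussianReal m v {x | t < |x - m|} ≤ ENNReal.ofReal (2 * (1 - stdCDF z)) := by
  rw [gaussianReal_eq_map_stdGaussian,
    Measure.map_apply (by fun_prop) (measurableSet_lt measurable_const (by fun_prop))]
  refine (measure_mono fun x hx => ?_).trans (stdGaussian_abs_gt_le z)
  simp only [Set.mem_preimage, Set.mem_ofPred_eq, add_sub_cancel_left, abs_mul,
    abs_of_nonneg (Real.sqrt_nonneg _)] at hx ⊢
  exact lt_of_mul_lt_mul_left (by linarith) (Real.sqrt_nonneg v)

lemma pi_gaussianReal_abs_sum_mul_sub_gt_le {ι : Type*} [Fintype ι] (m u : ι → ℝ) {t z : ℝ}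
    (ht : √(∑ i, u i ^ 2) * z ≤ t) :
    Measure.pi (fun i => gaussianReal (m i) 1) {y | t < |∑ i, u i * y i - ∑ i, u i * m i|}
      ≤ ENNReal.ofReal (2 * (1 - stdCDF z)) := by
  have hpre : {y : ι → ℝ | t < |∑ i, u i * y i - ∑ i, u i * m i|}
      = (fun y => ∑ i, u i * y i) ⁻¹' {x | t < |x - ∑ i, u i * m i|} := rfl
  rw [hpre, ← Measure.map_apply (by fun_prop) (measurableSet_lt measurable_const (by fun_prop)),
    map_pi_gaussianReal_sum_mul]
  refine gaussianReal_abs_sub_gt_le _ _ ?_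
  simpa [Real.coe_toNNReal _ (Finset.sum_nonneg fun i _ => sq_nonneg (u i))] using ht

section Projection

variable {n : ℕ} {F : Submodule ℝ (Fin n → ℝ)} {P : (Fin n → ℝ) →ₗ[ℝ] (Fin n → ℝ)}

lemma IsOrthProjOn.sum_mul_apply_eq (hP : IsOrthProjOn n F P) (a b : Fin n → ℝ) :
    ∑ k, a k * P b k = ∑ k, P a k * P b k := by
  have h := hP.2 a (P b) (hP.1 b)
  rcases div_eq_zero_iff.1 h with h | h
  · simpa [sub_mul, Finset.sum_sub_distrib, sub_eq_zero] using h
  · -- `inner2` divides by `n`, so it carries no information when `n = 0`; then all sums are empty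
    obtain rfl : n = 0 := by exact_mod_cast h
    simp

lemma IsOrthProjOn.sum_mul_apply_comm (hP : IsOrthProjOn n F P) (a b : Fin n → ℝ) :
    ∑ k, a k * P b k = ∑ k, P a k * b k := by
  calc ∑ k, a k * P b k
      = ∑ k, P b k * P a k := by
        rw [hP.sum_mul_apply_eq]
        exact Finset.sum_congr rfl fun k _ => mul_comm _ _
    _ = ∑ k, b k * P a k := (hP.sum_mul_apply_eq b a).symm
    _ = ∑ k, P a k * b k := Finset.sum_congr rfl fun k _ => mul_comm _ _

lemma IsOrthProjOn.apply_eq_sum (hP : IsOrthProjOn n F P) (y : Fin n → ℝ) (i : Fin n) :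
    P y i = ∑ j, P (Pi.single i 1) j * y j := by
  rw [← hP.sum_mul_apply_comm]
  simp [Pi.single_apply]

end Projection

lemma norm2_div_norm2_single {n : ℕ} (v : Fin n → ℝ) (i : Fin n) :
    norm2 n v / norm2 n (Pi.single i 1) = √(∑ j, v j ^ 2) := by
  have hn : (0 : ℝ) < n := by exact_mod_cast i.pos
  rw [norm2, norm2, ← Real.sqrt_div (by positivity)]
  simp [Pi.single_apply, hn.ne']

lemma sqrt_sum_sq_single_le_OmegaF {n : ℕ} (P : (Fin n → ℝ) →ₗ[ℝ] (Fin n → ℝ)) (i : Fin n) :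
    √(∑ j, P (Pi.single i 1) j ^ 2) ≤ OmegaF n P := by
  rw [← norm2_div_norm2_single]
  exact le_ciSup (f := fun i => norm2 n (P (Pi.single i 1)) / norm2 n (Pi.single i 1))
    (Set.finite_range _).bddAbove i

lemma abs_apply_le_normInf {n : ℕ} (v : Fin n → ℝ) (i : Fin n) : |v i| ≤ normInf n v :=
  le_ciSup (f := fun i => |v i|) (Set.finite_range _).bddAbove i

lemma ofReal_one_sub_le_measure_iInter_compl {Ω ι : Type*} [MeasurableSpace Ω] [Fintype ι]
    {μ : Measure Ω} [IsProbabilityMeasure μ] {s : ι → Set Ω} {α : ℝ} (hα : 0 ≤ α)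
    (hs : ∀ i, μ (s i) ≤ ENNReal.ofReal (α / Fintype.card ι)) :
    ENNReal.ofReal (1 - α) ≤ μ (⋂ i, (s i)ᶜ) := by
  have hunion : μ (⋃ i, s i) ≤ ENNReal.ofReal α := calc
    μ (⋃ i, s i) ≤ ∑ i, μ (s i) := measure_iUnion_fintype_le μ s
    _ ≤ ∑ _i : ι, ENNReal.ofReal (α / Fintype.card ι) := Finset.sum_le_sum fun i _ => hs i
    _ = ENNReal.ofReal (Fintype.card ι * (α / Fintype.card ι)) := by
      rw [Finset.sum_const, Finset.card_univ, nsmul_eq_mul, ← ENNReal.ofReal_natCast,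
        ← ENNReal.ofReal_mul (Nat.cast_nonneg _)]
    _ ≤ ENNReal.ofReal α := by
      refine ENNReal.ofReal_le_ofReal ?_
      rcases eq_or_ne (Fintype.card ι : ℝ) 0 with h | h
      · simpa [h] using hα
      · rw [mul_div_cancel₀ _ h]
  rw [← Set.compl_iUnion, ENNReal.ofReal_sub _ hα, ENNReal.ofReal_one, tsub_le_iff_right]
  calc 1 = μ Set.univ := measure_univ.symm
    _ ≤ μ (⋃ i, s i) + μ (⋃ i, s i)ᶜ := measure_univ_le_add_compl _
    _ ≤ μ (⋃ i, s i)ᶜ + ENNReal.ofReal α := by rw [add_comm]; gcongr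

lemma stdCDF_zCrit {n : ℕ} {α : ℝ} (hn : 0 < n) (hα : 0 < α) (hα1 : α < 1) :
    stdCDF (zCrit n α) = 1 - α / (4 * n) := by
  have : α / (4 * n) < 1 := by
    rw [div_lt_one (by positivity)]
    nlinarith [(Nat.one_le_cast.2 hn : (1 : ℝ) ≤ n)]
  exact stdCDF_PhiInv (by linarith) (by linarith [show 0 < α / (4 * n) by positivity])

lemma zCrit_nonneg {n : ℕ} {α : ℝ} (hn : 0 < n) (hα : 0 < α) (hα1 : α < 1) :
    0 ≤ zCrit n α := by
  have : α / (4 * n) < 1 / 2 := by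
    rw [div_lt_iff₀ (by positivity)]
    nlinarith [(Nat.one_le_cast.2 hn : (1 : ℝ) ≤ n)]
  exact PhiInv_nonneg (by linarith) (by linarith [show 0 < α / (4 * n) by positivity])

lemma covers_band_of_abs_sub_le {n : ℕ} {P : (Fin n → ℝ) →ₗ[ℝ] (Fin n → ℝ)} {q α εinf : ℝ}
    {f y : Fin n → ℝ} (hY : ∀ i, |y i - f i| ≤ zCrit n α)
    (hPY : ∀ i, |P y i - P f i| ≤ OmegaF n P * zCrit n α) (hf : ∀ i, |f i - P f i| ≤ εinf) :
    covers n (bandL n P q α εinf) (bandU n P q α εinf) f y := by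
  intro i
  have := abs_le.1 (hY i)
  have := abs_le.1 (hPY i)
  have := abs_le.1 (hf i)
  by_cases hT : Tstat n P y ≤ q <;> simp only [bandL, bandU, cRad, hT, if_true, if_false] <;>
    constructor <;> linarith

lemma pi_gaussianReal_band_miss_le {n : ℕ} {F : Submodule ℝ (Fin n → ℝ)}
    {P : (Fin n → ℝ) →ₗ[ℝ] (Fin n → ℝ)} (hP : IsOrthProjOn n F P) {α : ℝ} (hα : 0 < α)
    (hα1 : α < 1) (f : Fin n → ℝ) (i : Fin n) :
    Measure.pi (fun j => gaussianReal (f j) 1)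
      ({y | zCrit n α < |y i - f i|} ∪ {y | OmegaF n P * zCrit n α < |P y i - P f i|})
      ≤ ENNReal.ofReal (α / n) := by
  have hn := i.pos
  have htail : 2 * (1 - stdCDF (zCrit n α)) = α / (2 * n) := by
    rw [stdCDF_zCrit hn hα hα1]
    ring
  have hY := pi_gaussianReal_abs_sum_mul_sub_gt_le f (Pi.single i 1) (t := zCrit n α)
    (z := zCrit n α) (by simp [Pi.single_apply])
  have hPY := pi_gaussianReal_abs_sum_mul_sub_gt_le f (P (Pi.single i 1))
    (mul_le_mul_of_nonneg_right (sqrt_sum_sq_single_le_OmegaF P i) (zCrit_nonneg hn hα hα1))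
  simp only [Pi.single_apply, ite_mul, one_mul, zero_mul, Finset.sum_ite_eq', Finset.mem_univ,
    if_true, ← hP.apply_eq_sum, htail] at hY hPY
  calc _ ≤ _ := measure_union_le _ _
    _ ≤ ENNReal.ofReal (α / (2 * n)) + ENNReal.ofReal (α / (2 * n)) := add_le_add hY hPY
    _ = ENNReal.ofReal (α / n) := by
      rw [← ENNReal.ofReal_add (by positivity) (by positivity)]
      ring_nf

theorem band_coverage_on_V_general (n : ℕ)
    (F : Submodule ℝ (Fin n → ℝ))
    (P : (Fin n → ℝ) →ₗ[ℝ] (Fin n → ℝ)) (hP : IsOrthProjOn n F P)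
    (ε2 εinf : ℝ)
    (α : ℝ) (hα : 0 < α) (hα1 : α < 1)
    (q : ℝ) :
    ∀ f : Fin n → ℝ, norm2 n (f - P f) ≤ ε2 → normInf n (f - P f) ≤ εinf →
      ENNReal.ofReal (1 - α) ≤ gaussP n f 1
        {y | covers n (bandL n P q α εinf) (bandU n P q α εinf) f y} := by
  intro f _ hfinf
  have hG : gaussP n f 1 = Measure.pi fun i => gaussianReal (f i) 1 := by simp [gaussP]
  rw [hG]
  calc ENNReal.ofReal (1 - α)
      ≤ Measure.pi (fun i => gaussianReal (f i) 1) (⋂ i, ({y | zCrit n α < |y i - f i|} ∪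
          {y | OmegaF n P * zCrit n α < |P y i - P f i|})ᶜ) :=
        ofReal_one_sub_le_measure_iInter_compl hα.le fun i => by
          simpa using pi_gaussianReal_band_miss_le hP hα hα1 f i
    _ ≤ _ := measure_mono fun y hy => by
        simp only [Set.mem_iInter, Set.mem_compl_iff, Set.mem_union, not_or, Set.mem_ofPred_eq,
          not_lt] at hy
        exact covers_band_of_abs_sub_le (fun i => (hy i).1) (fun i => (hy i).2)
          fun i => (abs_apply_le_normInf (f - P f) i).trans hfinf

/-- the pretesting band covers the true `f` with probability at
least `1−α` uniformly over the enlarged set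
`V = {f : ‖f−Πf‖ ≤ ε₂ and ‖f−Πf‖_∞ ≤ ε_∞}` (σ = 1). -/
theorem band_coverage_on_V (n d : ℕ) (hd : d < n)
    (F : Submodule ℝ (Fin n → ℝ)) (hdim : Module.finrank ℝ F = d)
    (P : (Fin n → ℝ) →ₗ[ℝ] (Fin n → ℝ)) (hP : IsOrthProjOn n F P)
    (ε2 εinf : ℝ) (hε2 : 0 < ε2) (hεinf : 0 < εinf)
    (α γ : ℝ) (hα : 0 < α) (hα1 : α < 1) (hγ : 0 < γ) (hγ1 : γ < 1)
    (q : ℝ) (hq : q = chiSqQuantile (n - d) (1 - γ)) :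
    ∀ f : Fin n → ℝ, norm2 n (f - P f) ≤ ε2 → normInf n (f - P f) ≤ εinf →
      ENNReal.ofReal (1 - α) ≤ gaussP n f 1
        {y | covers n (bandL n P q α εinf) (bandU n P q α εinf) f y} :=
  band_coverage_on_V_general n F P hP ε2 εinf α hα hα1 q
end
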